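/- There exists θ > 0 (explicitly θ = 2 log 2 + ∑_{k≥1} 2^{-k} log(1 - 2^{-k})) such that log det Σ_n = θ·2^n - 2 log 2 + o(1) as n → ∞; more precisely, log det Σ_n - θ·2^n + 2 log 2 = O(n·2^{-n}). -/

import Mathlib

open Finset

/-- `log det Σ_n`, using `det Σ_n = (2^n - 1) ∏_{k=0}^{n-1} (2^{n-k} - 1)^{2^k}`. -/
noncomputable def logDetSigma (n : ℕ) : ℝ :=
  Real.log (((2 : ℝ) ^ n - 1) * ∏ k ∈ Finset.range n, ((2 : ℝ) ^ (n - k) - 1) ^ (2 ^ k))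

/-!
Write `log (2^m - 1) = m log 2 + log (1 - 2^{-m})`. Peeling off the `k = 0` term (induction on `n`) gives
`∑_{k<n} 2^k log (2^{n-k} - 1) = 2^n ∑_{j<n} 2^{-(j+1)} log (2^{j+1} - 1)`. The `m log 2` parts
sum exactly to `(2^{n+1} - n - 2) log 2`, which cancels the `n log 2` of the first factor up to
`-2 log 2`. What remains is `log (1 - 2^{-n})` plus `2^n` times a partial sum of the series
`∑ 2^{-m} log (1 - 2^{-m})`, whose terms are `O(4^{-m})`; so replacing the partial sum by the
full series costs `O(2^n 4^{-n}) = O(2^{-n})`, and the whole error is `O(2^{-n})`.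
-/

lemma Real.abs_log_one_sub_le_two_mul {x : ℝ} (hx : |x| ≤ 1 / 2) :
    |Real.log (1 - x)| ≤ 2 * |x| := by
  have h := Real.abs_log_sub_add_sum_range_le (by linarith : |x| < 1) 0
  simp only [range_zero, sum_empty, zero_add, pow_one] at h
  calc |Real.log (1 - x)| ≤ |x| / (1 - |x|) := h
    _ ≤ 2 * |x| := by rw [div_le_iff₀ (by linarith)]; nlinarith [abs_nonneg x]

lemma sum_range_pow_mul_sub {K : Type*} [Field K] {r : K} (hr : r ≠ 0) (g : ℕ → K) (n : ℕ) :
    ∑ k ∈ range n, r ^ k * g (n - k) = r ^ n * ∑ j ∈ range n, g (j + 1) / r ^ (j + 1) := by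
  induction n with
  | zero => simp
  | succ n ih =>
    have hshift : ∑ k ∈ range n, r ^ (k + 1) * g (n + 1 - (k + 1))
        = r * ∑ k ∈ range n, r ^ k * g (n - k) := by
      rw [mul_sum]
      exact sum_congr rfl fun k _ ↦ by rw [Nat.add_sub_add_right, pow_succ]; ring
    rw [sum_range_succ', hshift, ih, Nat.sub_zero, pow_zero, one_mul, sum_range_succ, mul_add,
      mul_div_cancel₀ _ (pow_ne_zero _ hr)]
    ring

lemma sum_range_succ_div_two_pow (n : ℕ) :
    ∑ j ∈ range n, ((j : ℝ) + 1) / 2 ^ (j + 1) = 2 - ((n : ℝ) + 2) / 2 ^ n := by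
  induction n with
  | zero => norm_num
  | succ n ih =>
    rw [sum_range_succ, ih]
    push_cast
    field_simp
    ring

lemma Real.log_two_pow_sub_one {m : ℕ} (hm : m ≠ 0) :
    Real.log (2 ^ m - 1) = m * Real.log 2 + Real.log (1 - 1 / 2 ^ m) := by
  have h : (1 : ℝ) / 2 ^ m < 1 := by
    rw [div_lt_one (by positivity)]; exact one_lt_pow₀ one_lt_two hm
  rw [← Real.log_pow, ← Real.log_mul (by positivity) (by linarith), mul_one_sub,
    mul_one_div_cancel (by positivity)]

lemma abs_log_one_sub_one_div_two_pow_le {m : ℕ} (hm : m ≠ 0) :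
    |Real.log (1 - 1 / 2 ^ m)| ≤ 2 / 2 ^ m := by
  have hx : |(1 : ℝ) / 2 ^ m| = 1 / 2 ^ m := abs_of_pos (by positivity)
  have h2m : (2 : ℝ) ≤ 2 ^ m := le_self_pow₀ one_le_two hm
  have h := Real.abs_log_one_sub_le_two_mul (x := 1 / 2 ^ m)
    (by rw [hx, div_le_div_iff₀ (by positivity) two_pos]; linarith)
  rwa [hx, mul_one_div] at h

lemma one_div_four_pow (n : ℕ) : (1 / 4 : ℝ) ^ n = 1 / (2 ^ n * 2 ^ n) := by
  rw [← mul_pow, one_div_pow]; norm_num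

noncomputable def thetaTerm (k : ℕ) : ℝ := 1 / 2 ^ (k + 1) * Real.log (1 - 1 / 2 ^ (k + 1))

lemma abs_thetaTerm_le (k : ℕ) : |thetaTerm k| ≤ 1 / 2 * (1 / 4) ^ k := by
  rw [thetaTerm, abs_mul, abs_of_pos (by positivity)]
  calc 1 / 2 ^ (k + 1) * |Real.log (1 - 1 / 2 ^ (k + 1))|
        ≤ 1 / 2 ^ (k + 1) * (2 / 2 ^ (k + 1)) := by
        gcongr; exact abs_log_one_sub_one_div_two_pow_le k.succ_ne_zero
    _ = 1 / 2 * (1 / 4) ^ k := by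
        rw [one_div_four_pow, pow_succ]
        field_simp

lemma summable_thetaTerm : Summable thetaTerm :=
  Summable.of_norm_bounded
    ((summable_geometric_of_lt_one (by norm_num) (by norm_num)).mul_left (1 / 2))
    abs_thetaTerm_le

lemma abs_sum_range_thetaTerm_sub_tsum_le (n : ℕ) :
    |∑ k ∈ range n, thetaTerm k - ∑' k, thetaTerm k| ≤ 2 / 3 * (1 / 4) ^ n := by
  have h := dist_le_of_le_geometric_of_tendsto (1 / 4) (1 / 2) (by norm_num)
    (f := fun n ↦ ∑ k ∈ range n, thetaTerm k)
    (fun n ↦ by simpa [Real.dist_eq, sum_range_succ, abs_sub_comm] using abs_thetaTerm_le n)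
    summable_thetaTerm.hasSum.tendsto_sum_nat n
  rw [Real.dist_eq] at h
  exact h.trans_eq (by ring)

lemma two_pow_sub_one_ne_zero {m : ℕ} (hm : m ≠ 0) : (2 : ℝ) ^ m - 1 ≠ 0 :=
  sub_ne_zero.2 (one_lt_pow₀ one_lt_two hm).ne'

lemma logDetSigma_eq {n : ℕ} (hn : n ≠ 0) :
    logDetSigma n = 2 ^ (n + 1) * Real.log 2 - 2 * Real.log 2 + Real.log (1 - 1 / 2 ^ n)
      + 2 ^ n * ∑ k ∈ range n, thetaTerm k := by
  have hfactor : ∀ k ∈ range n, ((2 : ℝ) ^ (n - k) - 1) ^ 2 ^ k ≠ 0 := fun k hk ↦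
    pow_ne_zero _ (two_pow_sub_one_ne_zero (by have := mem_range.1 hk; omega))
  have hterm (j : ℕ) : Real.log (2 ^ (j + 1) - 1) / 2 ^ (j + 1)
      = ((j : ℝ) + 1) / 2 ^ (j + 1) * Real.log 2 + thetaTerm j := by
    rw [Real.log_two_pow_sub_one j.succ_ne_zero, thetaTerm]
    push_cast
    ring
  rw [logDetSigma, Real.log_mul (two_pow_sub_one_ne_zero hn) (prod_ne_zero_iff.2 hfactor),
    Real.log_prod hfactor]
  simp only [Real.log_pow, Nat.cast_pow, Nat.cast_ofNat]
  rw [sum_range_pow_mul_sub two_ne_zero (fun m ↦ Real.log (2 ^ m - 1)) n,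
    sum_congr rfl fun j _ ↦ hterm j, sum_add_distrib, ← sum_mul, sum_range_succ_div_two_pow,
    Real.log_two_pow_sub_one hn]
  field_simp
  ring

lemma abs_logDetSigma_sub_le {n : ℕ} (hn : n ≠ 0) :
    |logDetSigma n - (2 * Real.log 2 + ∑' k, thetaTerm k) * 2 ^ n + 2 * Real.log 2|
      ≤ 8 / 3 / 2 ^ n := by
  set S := ∑' k, thetaTerm k
  have htail : |2 ^ n * (∑ k ∈ range n, thetaTerm k - S)| ≤ 2 / 3 / 2 ^ n := by
    rw [abs_mul, abs_of_pos (by positivity)]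
    calc (2 : ℝ) ^ n * |∑ k ∈ range n, thetaTerm k - S|
          ≤ 2 ^ n * (2 / 3 * (1 / 4) ^ n) := by
          gcongr; exact abs_sum_range_thetaTerm_sub_tsum_le n
      _ = 2 / 3 / 2 ^ n := by
          rw [one_div_four_pow]
          field_simp
  have herror : logDetSigma n - (2 * Real.log 2 + S) * 2 ^ n + 2 * Real.log 2
      = Real.log (1 - 1 / 2 ^ n) + 2 ^ n * (∑ k ∈ range n, thetaTerm k - S) := by
    rw [logDetSigma_eq hn]
    ring
  rw [herror]
  calc _ ≤ 2 / 2 ^ n + 2 / 3 / 2 ^ n :=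
        (abs_add_le _ _).trans (add_le_add (abs_log_one_sub_one_div_two_pow_le hn) htail)
    _ = 8 / 3 / 2 ^ n := by ring

theorem stmt_6 :
    ∃ θ : ℝ, 0 < θ ∧
      θ = 2 * Real.log 2 + ∑' k : ℕ, (1 / 2 ^ (k + 1) : ℝ) * Real.log (1 - 1 / 2 ^ (k + 1)) ∧
      ∃ C : ℝ, 0 < C ∧ ∀ n : ℕ, 1 ≤ n →
        |logDetSigma n - θ * 2 ^ n + 2 * Real.log 2| ≤ C * n / 2 ^ n := by
  have hS : |∑' k, thetaTerm k| ≤ 2 / 3 := by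
    simpa using abs_sum_range_thetaTerm_sub_tsum_le 0
  refine ⟨2 * Real.log 2 + ∑' k, thetaTerm k, ?_, rfl, 3, by norm_num, fun n hn ↦ ?_⟩
  · linarith [abs_le.1 hS, Real.log_two_gt_d9]
  calc _ ≤ 8 / 3 / 2 ^ n := abs_logDetSigma_sub_le (by omega)
    _ ≤ 3 * n / 2 ^ n := by
      gcongr
      linarith [(Nat.one_le_cast (α := ℝ)).2 hn]
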